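/- arXiv:2502.08585 — 2 statements merged into one kernel-verified Lean document; each statement's English description precedes it below -/
import Mathlib

section
/- Let f, g : ℝ^p × ℝ^d → ℝ be differentiable and λ > 0, and suppose Φ := f + λ·g is differentiable with L_Φ-Lipschitz gradient (L_Φ > 0) and bounded below by Φ* ∈ ℝ. Let 0 < α ≤ 1/L_Φ, and define iterates θ^{t+1} = θ^t − α·∇Φ(θ^t) with θ^t = (W^t, x^t). Suppose for every t there exists x_t^* ∈ ℝ^d that is a global minimizer of x ↦ g(W^t, x) (so ∇_x g(W^t, x_t^*) = 0), and that ‖∇_W g(W^t, x_t^*)‖² ≤ ε̄ for some ε̄ ≥ 0. Then for every T ≥ 1, (1/T)·Σ_{t=0}^{T−1} ‖∇f(θ^t) + λ·(∇g(θ^t) − ∇g(W^t, x_t^*))‖² ≤ 4·(Φ(θ^0) − Φ*)/(α·T) + 2·λ²·ε̄. -/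
/-!
By the descent lemma for the `L_Φ`-smooth `Φ`, each step with `α ≤ 1/L_Φ` decreases `Φ` by at
least `α/2 ‖∇Φ(θᵗ)‖²`, so telescoping bounds `Σ_{t<T} ‖∇Φ(θᵗ)‖²` by `2(Φ(θ⁰) − Φ*)/α`. The
vector to be bounded is `∇Φ(θᵗ) − λ ∇g(Wᵗ, x_t^*)`; as `x_t^*` minimizes `g(Wᵗ, ·)`, the
`x`-component of `∇g(Wᵗ, x_t^*)` vanishes and `‖∇g(Wᵗ, x_t^*)‖² = ‖∇_W g(Wᵗ, x_t^*)‖² ≤ ε̄`.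
Finally `‖a − b‖² ≤ 2‖a‖² + 2‖b‖²`.
-/

open scoped RealInnerProductSpace Gradient

/-- The point `(W, x)` of the product Hilbert space `ℝ^p × ℝ^d` (with the ℓ² product
norm `‖(u,v)‖² = ‖u‖² + ‖v‖²`). -/
noncomputable def pairL2 {E F : Type*} [NormedAddCommGroup E] [NormedAddCommGroup F]
    (a : E) (b : F) : WithLp 2 (E × F) := (WithLp.equiv 2 (E × F)).symm (a, b)

section Gradient

variable {H : Type*} [NormedAddCommGroup H] [InnerProductSpace ℝ H] [CompleteSpace H]

theorem gradient_add_const_mul {f g : H → ℝ} {x : H} (hf : DifferentiableAt ℝ f x)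
    (hg : DifferentiableAt ℝ g x) (c : ℝ) :
    ∇ (fun y => f y + c * g y) x = ∇ f x + c • ∇ g x := by
  refine HasGradientAt.gradient (hasGradientAt_iff_hasFDerivAt.2 ?_)
  refine (hf.hasFDerivAt.add (hg.hasFDerivAt.const_mul c)).congr_fderiv ?_
  ext u
  simp

theorem descent_lemma {Φ : H → ℝ} (hΦ : Differentiable ℝ Φ) {L : ℝ}
    (hLip : ∀ a b, ‖∇ Φ a - ∇ Φ b‖ ≤ L * ‖a - b‖) (x y : H) :
    Φ y ≤ Φ x + ⟪∇ Φ x, y - x⟫ + L / 2 * ‖y - x‖ ^ 2 := by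
  set v := y - x
  -- the slack of the claimed inequality along the segment, decreasing since `∇ Φ` is Lipschitz
  let h : ℝ → ℝ := fun s => Φ (x + s • v) - s * ⟪∇ Φ x, v⟫ - L / 2 * s ^ 2 * ‖v‖ ^ 2
  have hderiv : ∀ s, HasDerivAt h (⟪∇ Φ (x + s • v) - ∇ Φ x, v⟫ - L * s * ‖v‖ ^ 2) s := by
    intro s
    have hline : HasDerivAt (fun s : ℝ => x + s • v) v s := by
      simpa using ((hasDerivAt_id s).smul_const v).const_add x
    have hΦline := (hΦ (x + s • v)).hasFDerivAt.comp_hasDerivAt s hline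
    rw [← inner_gradient_left] at hΦline
    refine ((hΦline.sub ((hasDerivAt_id s).mul_const ⟪∇ Φ x, v⟫)).sub
      (((hasDerivAt_pow 2 s).const_mul (L / 2)).mul_const (‖v‖ ^ 2))).congr_deriv ?_
    simp only [inner_sub_left, Nat.cast_ofNat]
    ring
  have hanti : AntitoneOn h (Set.Ici 0) := by
    refine antitoneOn_of_hasDerivWithinAt_nonpos (convex_Ici 0)
      (fun s _ => (hderiv s).continuousAt.continuousWithinAt)
      (fun s _ => (hderiv s).hasDerivWithinAt) fun s hs => ?_
    rw [interior_Ici, Set.mem_Ioi] at hs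
    have : ⟪∇ Φ (x + s • v) - ∇ Φ x, v⟫ ≤ L * s * ‖v‖ ^ 2 := calc
      _ ≤ ‖∇ Φ (x + s • v) - ∇ Φ x‖ * ‖v‖ := real_inner_le_norm _ _
      _ ≤ L * ‖(x + s • v) - x‖ * ‖v‖ := by gcongr; exact hLip _ _
      _ = L * s * ‖v‖ ^ 2 := by
        rw [add_sub_cancel_left, norm_smul, Real.norm_of_nonneg hs.le]; ring
    linarith
  have h01 : h 1 ≤ h 0 := hanti Set.self_mem_Ici (Set.mem_Ici.mpr zero_le_one) zero_le_one
  simp only [h, v, one_smul, zero_smul, add_zero, add_sub_cancel, one_mul, zero_mul,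
    sub_zero, one_pow, mul_one, ne_eq, OfNat.ofNat_ne_zero, not_false_eq_true, zero_pow] at h01
  linarith

theorem gradient_step_sufficient_decrease {Φ : H → ℝ} (hΦ : Differentiable ℝ Φ) {L α : ℝ}
    (hLip : ∀ a b, ‖∇ Φ a - ∇ Φ b‖ ≤ L * ‖a - b‖) (hα : 0 ≤ α) (hαL : α * L ≤ 1) (x : H) :
    Φ (x - α • ∇ Φ x) ≤ Φ x - α / 2 * ‖∇ Φ x‖ ^ 2 := by
  have h := descent_lemma hΦ hLip x (x - α • ∇ Φ x)
  rw [sub_sub_cancel_left, inner_neg_right, real_inner_smul_right, real_inner_self_eq_norm_sq,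
    norm_neg, norm_smul, Real.norm_of_nonneg hα] at h
  nlinarith [mul_le_mul_of_nonneg_left hαL (mul_nonneg hα (sq_nonneg ‖∇ Φ x‖))]

theorem sum_sq_norm_gradient_le_of_gradient_descent {Φ : H → ℝ} (hΦ : Differentiable ℝ Φ)
    {L α : ℝ} (hLip : ∀ a b, ‖∇ Φ a - ∇ Φ b‖ ≤ L * ‖a - b‖) (hα : 0 ≤ α) (hαL : α * L ≤ 1)
    {θ : ℕ → H} (hθ : ∀ t, θ (t + 1) = θ t - α • ∇ Φ (θ t)) (T : ℕ) :
    α / 2 * ∑ t ∈ Finset.range T, ‖∇ Φ (θ t)‖ ^ 2 ≤ Φ (θ 0) - Φ (θ T) := by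
  rw [← Finset.sum_range_sub' (fun t => Φ (θ t)), Finset.mul_sum]
  refine Finset.sum_le_sum fun t _ => ?_
  have := gradient_step_sufficient_decrease hΦ hLip hα hαL (θ t)
  rw [← hθ] at this
  linarith

end Gradient

section Product

variable {E F : Type*} [NormedAddCommGroup E] [InnerProductSpace ℝ E] [CompleteSpace E]
  [NormedAddCommGroup F] [InnerProductSpace ℝ F] [CompleteSpace F]

theorem hasGradientAt_pairL2_left {g : WithLp 2 (E × F) → ℝ} {w : E} {x : F}
    (hg : DifferentiableAt ℝ g (pairL2 w x)) :
    HasGradientAt (fun w' => g (pairL2 w' x)) (∇ g (pairL2 w x)).fst w := by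
  have hpair : HasFDerivAt (fun w' : E => pairL2 w' x)
      ((WithLp.prodContinuousLinearEquiv 2 ℝ E F).symm.toContinuousLinearMap.comp
        (ContinuousLinearMap.inl ℝ E F)) w :=
    (WithLp.prodContinuousLinearEquiv 2 ℝ E F).symm.hasFDerivAt.comp w
      (hasFDerivAt_prodMk_left w x)
  refine hasGradientAt_iff_hasFDerivAt.2 ((hg.hasFDerivAt.comp w hpair).congr_fderiv ?_)
  ext u
  simp [← inner_gradient_left]

theorem hasGradientAt_pairL2_right {g : WithLp 2 (E × F) → ℝ} {w : E} {x : F}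
    (hg : DifferentiableAt ℝ g (pairL2 w x)) :
    HasGradientAt (fun x' => g (pairL2 w x')) (∇ g (pairL2 w x)).snd x := by
  have hpair : HasFDerivAt (fun x' : F => pairL2 w x')
      ((WithLp.prodContinuousLinearEquiv 2 ℝ E F).symm.toContinuousLinearMap.comp
        (ContinuousLinearMap.inr ℝ E F)) x :=
    (WithLp.prodContinuousLinearEquiv 2 ℝ E F).symm.hasFDerivAt.comp x
      (hasFDerivAt_prodMk_right w x)
  refine hasGradientAt_iff_hasFDerivAt.2 ((hg.hasFDerivAt.comp x hpair).congr_fderiv ?_)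
  ext u
  simp [← inner_gradient_left]

theorem IsLocalMin.norm_gradient_pairL2_eq {g : WithLp 2 (E × F) → ℝ} {w : E} {x : F}
    (hg : DifferentiableAt ℝ g (pairL2 w x)) (hmin : IsLocalMin (fun x' => g (pairL2 w x')) x) :
    ‖∇ g (pairL2 w x)‖ = ‖∇ (fun w' => g (pairL2 w' x)) w‖ := by
  have hsnd : (∇ g (pairL2 w x)).snd = 0 := by
    have := hmin.hasFDerivAt_eq_zero (hasGradientAt_pairL2_right hg).hasFDerivAt
    simpa using this
  rw [(hasGradientAt_pairL2_left hg).gradient, ← sq_eq_sq₀ (norm_nonneg _) (norm_nonneg _),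
    WithLp.prod_norm_sq_eq_of_L2, hsnd, norm_zero]
  ring

end Product

theorem norm_sub_smul_sq_le {V : Type*} [SeminormedAddCommGroup V] [NormedSpace ℝ V]
    (a b : V) (c : ℝ) : ‖a - c • b‖ ^ 2 ≤ 2 * ‖a‖ ^ 2 + 2 * c ^ 2 * ‖b‖ ^ 2 := by
  calc ‖a - c • b‖ ^ 2 ≤ (‖a‖ + ‖c • b‖) ^ 2 := by gcongr; exact norm_sub_le _ _
    _ ≤ 2 * (‖a‖ ^ 2 + ‖c • b‖ ^ 2) := add_sq_le
    _ = 2 * ‖a‖ ^ 2 + 2 * c ^ 2 * ‖b‖ ^ 2 := by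
      rw [norm_smul, Real.norm_eq_abs, mul_pow, sq_abs]; ring

theorem penalized_bilevel_gd_bound_general (p d : ℕ)
    (f g : WithLp 2 (EuclideanSpace ℝ (Fin p) × EuclideanSpace ℝ (Fin d)) → ℝ)
    (hf : Differentiable ℝ f) (hg : Differentiable ℝ g)
    (lam : ℝ)
    (Φ : WithLp 2 (EuclideanSpace ℝ (Fin p) × EuclideanSpace ℝ (Fin d)) → ℝ)
    (hΦdef : ∀ θ, Φ θ = f θ + lam * g θ)
    (LΦ : ℝ) (hLΦ : 0 < LΦ)
    (hLip : ∀ θ θ', ‖gradient Φ θ - gradient Φ θ'‖ ≤ LΦ * ‖θ - θ'‖)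
    (Φstar : ℝ) (hbdd : ∀ θ, Φstar ≤ Φ θ)
    (α : ℝ) (hα0 : 0 < α) (hα1 : α ≤ 1 / LΦ)
    (W : ℕ → EuclideanSpace ℝ (Fin p)) (X : ℕ → EuclideanSpace ℝ (Fin d))
    (hupd : ∀ t, pairL2 (W (t + 1)) (X (t + 1)) =
        pairL2 (W t) (X t) - α • gradient Φ (pairL2 (W t) (X t)))
    (xstar : ℕ → EuclideanSpace ℝ (Fin d))
    (hxstar : ∀ t y, g (pairL2 (W t) (xstar t)) ≤ g (pairL2 (W t) y))
    (εb : ℝ)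
    (hWgrad : ∀ t, ‖gradient (fun W' => g (pairL2 W' (xstar t))) (W t)‖ ^ 2 ≤ εb)
    (T : ℕ) (hT : 1 ≤ T) :
    (1 / (T : ℝ)) * ∑ t ∈ Finset.range T,
        ‖gradient f (pairL2 (W t) (X t)) +
          lam • (gradient g (pairL2 (W t) (X t)) - gradient g (pairL2 (W t) (xstar t)))‖ ^ 2
      ≤ 4 * (Φ (pairL2 (W 0) (X 0)) - Φstar) / (α * T) + 2 * lam ^ 2 * εb := by
  set θ := fun t => pairL2 (W t) (X t)
  have hΦ : Differentiable ℝ Φ := by rw [funext hΦdef]; exact hf.add (hg.const_mul lam)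
  have hgradΦ : ∀ θ, ∇ Φ θ = ∇ f θ + lam • ∇ g θ := by
    rw [funext hΦdef]; exact fun θ => gradient_add_const_mul (hf θ) (hg θ) lam
  have hdescent : α / 2 * ∑ t ∈ Finset.range T, ‖∇ Φ (θ t)‖ ^ 2 ≤ Φ (θ 0) - Φstar :=
    (sum_sq_norm_gradient_le_of_gradient_descent hΦ hLip hα0.le ((le_div_iff₀ hLΦ).1 hα1)
      hupd T).trans (by linarith [hbdd (θ T)])
  have hpoint : ∀ t, ‖∇ f (θ t) + lam • (∇ g (θ t) - ∇ g (pairL2 (W t) (xstar t)))‖ ^ 2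
      ≤ 2 * ‖∇ Φ (θ t)‖ ^ 2 + 2 * lam ^ 2 * εb := by
    intro t
    have hmin : IsLocalMin (fun y => g (pairL2 (W t) y)) (xstar t) :=
      Filter.Eventually.of_forall (hxstar t)
    rw [show ∇ f (θ t) + lam • (∇ g (θ t) - ∇ g (pairL2 (W t) (xstar t)))
        = ∇ Φ (θ t) - lam • ∇ g (pairL2 (W t) (xstar t)) by rw [hgradΦ, smul_sub]; abel]
    refine (norm_sub_smul_sq_le _ _ _).trans ?_
    rw [hmin.norm_gradient_pairL2_eq (hg _)]
    gcongr
    exact hWgrad t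
  rw [one_div_mul_eq_div, div_le_iff₀ (Nat.cast_pos.2 hT)]
  calc _ ≤ ∑ t ∈ Finset.range T, (2 * ‖∇ Φ (θ t)‖ ^ 2 + 2 * lam ^ 2 * εb) :=
        Finset.sum_le_sum fun t _ => hpoint t
    _ = 4 / α * (α / 2 * ∑ t ∈ Finset.range T, ‖∇ Φ (θ t)‖ ^ 2) + T * (2 * lam ^ 2 * εb) := by
        rw [Finset.sum_add_distrib, ← Finset.mul_sum, Finset.sum_const, Finset.card_range,
          nsmul_eq_mul]
        field_simp
        ring
    _ ≤ 4 / α * (Φ (θ 0) - Φstar) + T * (2 * lam ^ 2 * εb) := by gcongr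
    _ = _ := by field_simp; ring

/-- For gradient descent on the penalized objective `Φ = f + λ g`
(lower bounded, `L_Φ`-Lipschitz gradient, step `0 < α ≤ 1/L_Φ`), if for each `t` the
point `x_t^*` globally minimizes `g(Wᵗ, ·)` and `‖∇_W g(Wᵗ, x_t^*)‖² ≤ ε̄`, then
`(1/T) Σ_{t<T} ‖∇f(θᵗ) + λ(∇g(θᵗ) − ∇g(Wᵗ, x_t^*))‖² ≤ 4(Φ(θ⁰) − Φ*)/(αT) + 2λ²ε̄`. -/
theorem penalized_bilevel_gd_bound (p d : ℕ)
    (f g : WithLp 2 (EuclideanSpace ℝ (Fin p) × EuclideanSpace ℝ (Fin d)) → ℝ)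
    (hf : Differentiable ℝ f) (hg : Differentiable ℝ g)
    (lam : ℝ) (hlam : 0 < lam)
    (Φ : WithLp 2 (EuclideanSpace ℝ (Fin p) × EuclideanSpace ℝ (Fin d)) → ℝ)
    (hΦdef : ∀ θ, Φ θ = f θ + lam * g θ)
    (LΦ : ℝ) (hLΦ : 0 < LΦ)
    (hLip : ∀ θ θ', ‖gradient Φ θ - gradient Φ θ'‖ ≤ LΦ * ‖θ - θ'‖)
    (Φstar : ℝ) (hbdd : ∀ θ, Φstar ≤ Φ θ)
    (α : ℝ) (hα0 : 0 < α) (hα1 : α ≤ 1 / LΦ)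
    (W : ℕ → EuclideanSpace ℝ (Fin p)) (X : ℕ → EuclideanSpace ℝ (Fin d))
    (hupd : ∀ t, pairL2 (W (t + 1)) (X (t + 1)) =
        pairL2 (W t) (X t) - α • gradient Φ (pairL2 (W t) (X t)))
    (xstar : ℕ → EuclideanSpace ℝ (Fin d))
    (hxstar : ∀ t y, g (pairL2 (W t) (xstar t)) ≤ g (pairL2 (W t) y))
    (εb : ℝ) (hεb : 0 ≤ εb)
    (hWgrad : ∀ t, ‖gradient (fun W' => g (pairL2 W' (xstar t))) (W t)‖ ^ 2 ≤ εb)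
    (T : ℕ) (hT : 1 ≤ T) :
    (1 / (T : ℝ)) * ∑ t ∈ Finset.range T,
        ‖gradient f (pairL2 (W t) (X t)) +
          lam • (gradient g (pairL2 (W t) (X t)) - gradient g (pairL2 (W t) (xstar t)))‖ ^ 2
      ≤ 4 * (Φ (pairL2 (W 0) (X 0)) - Φstar) / (α * T) + 2 * lam ^ 2 * εb :=
  penalized_bilevel_gd_bound_general p d f g hf hg lam Φ hΦdef LΦ hLΦ hLip Φstar hbdd α hα0 hα1 W X
    hupd xstar hxstar εb hWgrad T hT
end

section
/- Let f, g : ℝ^p × ℝ^d → ℝ, suppose for every W the minimum min_{x'} g(W, x') is attained, and define the penalty p(W, x) := g(W, x) − min_{x'} g(W, x') ≥ 0. Fix λ > 0 and suppose (W̄, x̄) is a global minimizer of (W, x) ↦ f(W, x) + λ·p(W, x). Then (W̄, x̄) is a global solution of the relaxed constrained problem with tolerance ε̄ := p(W̄, x̄): that is, for every (W, x) with p(W, x) ≤ ε̄, one has f(W̄, x̄) ≤ f(W, x). -/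
theorem isMinOn_sublevel_of_penalized_min {α R : Type*} [Ring R] [PartialOrder R]
    [IsOrderedRing R] {f p : α → R} {lam : R} (hlam : 0 ≤ lam) {a : α}
    (hmin : ∀ x, f a + lam * p a ≤ f x + lam * p x) :
    IsMinOn f {x | p x ≤ p a} a := fun x (hx : p x ≤ p a) =>
  le_of_add_le_add_right <|
    calc f a + lam * p a ≤ f x + lam * p x := hmin x
      _ ≤ f x + lam * p a := by gcongr

theorem penalized_minimizer_solves_relaxed_general (pdim d : ℕ)
    (f : EuclideanSpace ℝ (Fin pdim) → EuclideanSpace ℝ (Fin d) → ℝ)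
    (p : EuclideanSpace ℝ (Fin pdim) → EuclideanSpace ℝ (Fin d) → ℝ)
    (lam : ℝ) (hlam : 0 < lam)
    (Wbar : EuclideanSpace ℝ (Fin pdim)) (xbar : EuclideanSpace ℝ (Fin d))
    (hglob : ∀ W x, f Wbar xbar + lam * p Wbar xbar ≤ f W x + lam * p W x) :
    ∀ W x, p W x ≤ p Wbar xbar → f Wbar xbar ≤ f W x := fun W x hle =>
  isMinOn_iff.mp
    (isMinOn_sublevel_of_penalized_min (f := Function.uncurry f) (p := Function.uncurry p)
      (a := (Wbar, xbar)) hlam.le fun z => hglob z.1 z.2) (W, x) hle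

/-- If `(W̄, x̄)` globally minimizes the penalized objective
`f + λ p` with `p(W,x) = g(W,x) − min_{x'} g(W,x')`, then `(W̄, x̄)` is a global
solution of the relaxed constrained problem with tolerance `ε̄ = p(W̄, x̄)`:
every `(W,x)` with `p(W,x) ≤ ε̄` satisfies `f(W̄,x̄) ≤ f(W,x)`. -/
theorem penalized_minimizer_solves_relaxed (pdim d : ℕ)
    (f g : EuclideanSpace ℝ (Fin pdim) → EuclideanSpace ℝ (Fin d) → ℝ)
    (hattain : ∀ W, ∃ xm, ∀ x', g W xm ≤ g W x')
    (p : EuclideanSpace ℝ (Fin pdim) → EuclideanSpace ℝ (Fin d) → ℝ)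
    (hpdef : ∀ W x, p W x = g W x - sInf (Set.range (g W)))
    (lam : ℝ) (hlam : 0 < lam)
    (Wbar : EuclideanSpace ℝ (Fin pdim)) (xbar : EuclideanSpace ℝ (Fin d))
    (hglob : ∀ W x, f Wbar xbar + lam * p Wbar xbar ≤ f W x + lam * p W x) :
    ∀ W x, p W x ≤ p Wbar xbar → f Wbar xbar ≤ f W x :=
  penalized_minimizer_solves_relaxed_general pdim d f p lam hlam Wbar xbar hglob
end
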